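/- Let w ∈ S_n (n ≥ 2) be an involution avoiding patterns 4231 and 3412 whose one-line notation begins with n (i.e., w(1) = n). Then w is the order-reversing permutation w_0 sending i to n+1−i for all i. -/

import Mathlib

/-- `w` is the block-reversal permutation (longest element of the Young subgroup)
associated to the composition `c`: within the block containing position `j`,
`w` maps `j` to its mirror image. -/
def IsBlockRev {n : ℕ} (c : Composition n) (w : Equiv.Perm (Fin n)) : Prop :=
  ∀ j : Fin n, (w j : ℕ) + (j : ℕ) + 1 =
    c.sizeUpTo (c.index j) + c.sizeUpTo ((c.index j : ℕ) + 1)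

/-- `w` avoids the pattern 4231. -/
def Avoids4231 {m : ℕ} (w : Equiv.Perm (Fin m)) : Prop :=
  ¬ ∃ i j k l : Fin m, i < j ∧ j < k ∧ k < l ∧ w l < w j ∧ w j < w k ∧ w k < w i

/-- `w` avoids the pattern 3412. -/
def Avoids3412 {m : ℕ} (w : Equiv.Perm (Fin m)) : Prop :=
  ¬ ∃ i j k l : Fin m, i < j ∧ j < k ∧ k < l ∧ w k < w l ∧ w l < w i ∧ w i < w j

/-- Number of inversions (Coxeter length) of a permutation. -/
def invNum {n : ℕ} (w : Equiv.Perm (Fin n)) : ℕ :=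
  (Finset.univ.filter (fun p : Fin n × Fin n => p.1 < p.2 ∧ w p.2 < w p.1)).card

/-- The Young subgroup associated to a composition `c`: permutations preserving
each consecutive block. -/
def YoungSubgroup {n : ℕ} (c : Composition n) : Subgroup (Equiv.Perm (Fin n)) where
  carrier := {w | ∀ j : Fin n, c.index (w j) = c.index j}
  one_mem' := by intro j; rfl
  mul_mem' := by
    intro a b ha hb j
    have h1 := ha (b j)
    have h2 := hb j
    simpa [Equiv.Perm.mul_apply] using h1.trans h2
  inv_mem' := by
    intro a ha j
    have h := ha (a⁻¹ j)
    rw [show a (a⁻¹ j) = j by simp] at h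
    exact h.symm

/-- The decreasing reordering of a list of naturals. -/
def sortDesc (l : List ℕ) : List ℕ := Multiset.sort (l : Multiset ℕ) (· ≥ ·)

/-- The conjugate of a partition given as a list: `conjList l j = #{i : l i ≥ j+1}`. -/
def conjList (l : List ℕ) : List ℕ :=
  (List.range (l.foldr max 0)).map (fun j => (l.filter (fun a => j + 1 ≤ a)).length)

/-- Schensted row insertion: insert `x` into a row, returning the new row and
the bumped entry (if any). -/
def insertRow (x : ℕ) : List ℕ → List ℕ × Option ℕ
  | [] => ([x], none)
  | y :: ys =>
    if x < y then (x :: ys, some y)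
    else
      let p := insertRow x ys
      (y :: p.1, p.2)

/-- Schensted insertion of `x` into a tableau, returning the new tableau and the
index of the row where a new cell was created. -/
def insertT (x : ℕ) : List (List ℕ) → List (List ℕ) × ℕ
  | [] => ([[x]], 0)
  | r :: rs =>
    match insertRow x r with
    | (r', none) => (r' :: rs, 0)
    | (r', some y) =>
      let p := insertT y rs
      (r' :: p.1, p.2 + 1)

/-- Add a cell labelled `lbl` at the end of row `i` of a tableau. -/
def addCell (lbl : ℕ) : ℕ → List (List ℕ) → List (List ℕ)
  | _, [] => [[lbl]]
  | 0, r :: rs => (r ++ [lbl]) :: rs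
  | i + 1, r :: rs => r :: addCell lbl i rs

/-- The Robinson–Schensted correspondence: maps a word to its pair
(insertion tableau `P`, recording tableau `Q`). -/
def RS (word : List ℕ) : List (List ℕ) × List (List ℕ) :=
  (word.zipIdx.map Prod.swap).foldl
    (fun pq ix =>
      let p := insertT ix.2 pq.1
      (p.1, addCell (ix.1 + 1) p.2 pq.2))
    ([], [])

/-- The one-line word (with values in `{1, …, n}`) of a permutation of `Fin n`. -/
def wordOf {n : ℕ} (w : Equiv.Perm (Fin n)) : List ℕ :=
  List.ofFn (fun i => (w i : ℕ) + 1)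

/-- The shape of a tableau: the list of its row lengths. -/
def shapeOf (t : List (List ℕ)) : List ℕ := t.map List.length

/-- `t` is a standard Young tableau with entries `1, …, n`. -/
def IsStandard (n : ℕ) (t : List (List ℕ)) : Prop :=
  (∀ r ∈ t, List.Pairwise (· < ·) r) ∧
  List.Pairwise (· ≥ ·) (shapeOf t) ∧
  (∀ r ∈ t, r ≠ []) ∧
  (∀ i k : ℕ, i + 1 < t.length → k < (t.getD (i + 1) []).length →
      (t.getD i []).getD k 0 < (t.getD (i + 1) []).getD k 0) ∧
  t.flatten.Perm (List.range' 1 n)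

/-- `t` is a reading tableau: every entry `p` is either in the first row, or
`p - 1` lies in the previous row. -/
def IsReading (t : List (List ℕ)) : Prop :=
  ∀ p ∈ t.flatten,
    t.findIdx (fun r => r.contains p) = 0 ∨
      (p - 1) ∈ t.getD (t.findIdx (fun r => r.contains p) - 1) []

/-- Length of the `j`-th column of the Young diagram of `l`. -/
def colLen (l : List ℕ) (j : ℕ) : ℕ := (l.filter (fun a => j < a)).length

/-- The column superstandard tableau of shape `l`: cells are numbered
consecutively within each column, columns taken from left to right. -/
def cssTableau (l : List ℕ) : List (List ℕ) :=
  (List.range l.length).map fun i =>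
    (List.range (l.getD i 0)).map fun j =>
      ((List.range j).map (colLen l)).sum + i + 1

/-!
If `w` agrees with `Fin.rev` on the positions `j < i`, then, being an involution, it also agrees
with `Fin.rev` on the positions `j > rev i`; hence it permutes the middle window `[i, rev i]`.
Should `w i ≠ rev i`, the position `c = w (rev i)` of the value `rev i` lies in that window to the
right of `i`, and any `j < i` yields the pattern 4231 at the positions `j < i < c < rev j`.
Since `w 0 = rev 0`, induction on `i` gives `w = rev`.
-/

namespace Fin

variable {n : ℕ} {w : Equiv.Perm (Fin n)} {i j : Fin n}

theorem rev_mem_Icc_rev (hj : j ∈ Set.Icc i i.rev) : j.rev ∈ Set.Icc i i.rev :=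
  ⟨le_rev_iff.1 hj.2, rev_le_rev.2 hj.1⟩

theorem apply_eq_rev_of_notMem_Icc_rev (hw : Function.Involutive w)
    (hprefix : ∀ j < i, w j = j.rev) (hj : j ∉ Set.Icc i i.rev) : w j = j.rev := by
  rcases not_and_or.1 hj with hj | hj
  · exact hprefix j (not_le.1 hj)
  · have hwj : w j.rev = j := by simpa using hprefix j.rev (rev_lt_iff.1 (not_le.1 hj))
    exact hw.eq_iff.2 hwj.symm

theorem apply_mem_Icc_rev (hw : Function.Involutive w) (hprefix : ∀ j < i, w j = j.rev)
    (hj : j ∈ Set.Icc i i.rev) : w j ∈ Set.Icc i i.rev := by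
  by_contra hwj
  have hj' : j = (w j).rev := (hw j).symm.trans (apply_eq_rev_of_notMem_Icc_rev hw hprefix hwj)
  exact hwj (rev_eq_iff.1 hj'.symm ▸ rev_mem_Icc_rev hj)

theorem apply_eq_rev_of_avoids4231 (hw : Function.Involutive w)
    (hprefix : ∀ j < i, w j = j.rev) (h4231 : Avoids4231 w) (hji : j < i) : w i = i.rev := by
  by_contra hne
  have hi : i ∈ Set.Icc i i.rev := by
    by_contra hi
    exact hne (apply_eq_rev_of_notMem_Icc_rev hw hprefix hi)
  have hwi := apply_mem_Icc_rev hw hprefix hi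
  set c := w i.rev
  have hc : c ∈ Set.Icc i i.rev := apply_mem_Icc_rev hw hprefix (rev_mem_Icc_rev hi)
  have hwc : w c = i.rev := hw i.rev
  have hic : i < c := lt_of_le_of_ne hc.1 fun hic => hne (hic ▸ hwc)
  have hwj : w j = j.rev := hprefix j hji
  have hwjrev : w j.rev = j := hw.eq_iff.2 hwj.symm
  exact h4231 ⟨j, i, c, j.rev, hji, hic, hc.2.trans_lt (rev_lt_rev.2 hji),
    hwjrev.trans_lt (hji.trans_le hwi.1), (hwi.2.lt_of_ne hne).trans_eq hwc.symm,
    hwc.trans_lt ((rev_lt_rev.2 hji).trans_eq hwj.symm)⟩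

end Fin

theorem involution_avoiding_first_max_eq_w0_general {n : ℕ} (h0 : 0 < n)
    (w : Equiv.Perm (Fin n)) (hw : w * w = 1)
    (h1 : Avoids4231 w)
    (hfirst : (w ⟨0, h0⟩ : ℕ) = n - 1) :
    ∀ i : Fin n, (w i : ℕ) + (i : ℕ) = n - 1 := by
  have hinv : Function.Involutive w := fun x => by
    rw [← Equiv.Perm.mul_apply, hw, Equiv.Perm.one_apply]
  have hrev : ∀ i : Fin n, w i = i.rev := by
    intro i
    induction i using WellFoundedLT.induction with
    | _ i ih =>
      rcases Nat.eq_zero_or_pos i with hi | hi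
      · ext
        rw [show i = ⟨0, h0⟩ from Fin.ext hi, hfirst, Fin.val_rev]
      · exact Fin.apply_eq_rev_of_avoids4231 hinv ih h1 (j := ⟨0, h0⟩) hi
  intro i
  rw [hrev i, Fin.val_rev]
  omega

/-- An involution of `S_n` (`n ≥ 2`) avoiding 4231 and 3412 whose one-line
notation begins with `n` is the order-reversing permutation `w₀`. -/
theorem involution_avoiding_first_max_eq_w0 {n : ℕ} (hn : 2 ≤ n) (h0 : 0 < n)
    (w : Equiv.Perm (Fin n)) (hw : w * w = 1)
    (h1 : Avoids4231 w) (h2 : Avoids3412 w)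
    (hfirst : (w ⟨0, h0⟩ : ℕ) = n - 1) :
    ∀ i : Fin n, (w i : ℕ) + (i : ℕ) = n - 1 :=
  involution_avoiding_first_max_eq_w0_general h0 w hw h1 hfirst
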